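/- arXiv:2111.10691 — 5 statements merged into one kernel-verified Lean document; each statement's English description precedes it below -/
import Mathlib

section
/- Let V be a vector space over ℂ and V₁ ⊆ V a linear subspace. Let s ≥ 1 and k ≥ 0 be integers, let μ₁, …, μ_s ∈ ℂ∖{0} be pairwise distinct, and for each 1 ≤ i ≤ s and 0 ≤ j ≤ k let f_{i,j} ∈ ℂ[t] be a polynomial of degree exactly j and v_{i,j} ∈ V. If for every m ∈ ℤ the element ∑_{i=1}^{s} ∑_{j=0}^{k} μ_i^m · f_{i,j}(m) · v_{i,j} lies in V₁, then v_{i,j} ∈ V₁ for all i and j. -/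
/-!
Applying a linear functional `φ` on `V ⧸ V₁` reduces the claim to scalars: with
`a i j = φ (v i j)` and `P i = ∑ j, a i j • f i j` we get `∑ i, μ i ^ m * (P i).eval m = 0`
for all `m : ℤ`. Such a relation forces every `P i = 0`: after dividing by `μ i₀ ^ m`, applying
the forward difference `deg P i₀ + 1` times kills the `i₀`-th term, and on
`m ↦ λ ^ m * P.eval m` it acts by `P ↦ λ • P(X + 1) - P`, which multiplies the leading
coefficient by `λ - 1` and is therefore injective for `λ ≠ 1`; induct on the number of terms.
Finally `a i j = 0` because polynomials of distinct degrees are linearly independent.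
-/

namespace Polynomial

variable {K : Type*} [Field K]

def expPoly (μ : K) (P : K[X]) : ℤ → K := fun m => μ ^ m * P.eval (m : K)

lemma expPoly_zero (μ : K) : expPoly μ 0 = 0 := by
  ext m
  simp [expPoly]

lemma expPoly_div (μ c : K) (P : K[X]) (m : ℤ) :
    expPoly (μ / c) P m = (c ^ m)⁻¹ * expPoly μ P m := by
  simp only [expPoly, div_zpow]
  ring

noncomputable def twistedFwdDiff (μ : K) : K[X] →ₗ[K] K[X] := μ • taylor 1 - LinearMap.id

lemma twistedFwdDiff_apply (μ : K) (P : K[X]) :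
    twistedFwdDiff μ P = μ • taylor 1 P - P := rfl

lemma fwdDiff_expPoly {μ : K} (hμ : μ ≠ 0) (P : K[X]) :
    fwdDiff 1 (expPoly μ P) = expPoly μ (twistedFwdDiff μ P) := by
  ext m
  simp only [fwdDiff, expPoly, twistedFwdDiff_apply, eval_sub, eval_smul, taylor_eval,
    smul_eq_mul, Int.cast_add, Int.cast_one, zpow_add_one₀ hμ]
  ring

lemma fwdDiff_iter_expPoly {μ : K} (hμ : μ ≠ 0) (P : K[X]) (n : ℕ) :
    (fwdDiff 1)^[n] (expPoly μ P) = expPoly μ ((twistedFwdDiff μ)^[n] P) :=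
  have hsemi : Function.Semiconj (expPoly μ) (twistedFwdDiff μ) (fwdDiff 1) :=
    fun P => (fwdDiff_expPoly hμ P).symm
  (hsemi.iterate_right n P).symm

lemma twistedFwdDiff_one_iter_eq_zero [Infinite K] {P : K[X]} {n : ℕ} (hP : P.natDegree < n) :
    (twistedFwdDiff (1 : K))^[n] P = 0 := by
  have hsemi : Function.Semiconj (fun P : K[X] => P.eval) (twistedFwdDiff 1) (fwdDiff 1) := by
    intro P
    ext x
    simp [twistedFwdDiff_apply, fwdDiff, taylor_eval]
  refine Polynomial.funext fun x => ?_
  simpa [fwdDiff_iter_eq_zero_of_degree_lt hP] using congrFun (hsemi.iterate_right n P) x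

lemma twistedFwdDiff_injective {μ : K} (hμ : μ ≠ 1) :
    Function.Injective (twistedFwdDiff μ) := by
  refine (injective_iff_map_eq_zero _).mpr fun P hP => ?_
  rw [twistedFwdDiff_apply, sub_eq_zero] at hP
  have hlc := congrArg leadingCoeff hP
  rw [smul_eq_C_mul, leadingCoeff_mul, leadingCoeff_C, leadingCoeff_taylor] at hlc
  have : (μ - 1) * P.leadingCoeff = 0 := by linear_combination hlc
  simpa [sub_ne_zero.mpr hμ] using this

lemma eq_zero_of_expPoly_eq_zero [CharZero K] {μ : K} (hμ : μ ≠ 0) {P : K[X]}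
    (h : expPoly μ P = 0) : P = 0 := by
  refine eq_zero_of_infinite_isRoot P
    ((Set.infinite_range_of_injective Int.cast_injective).mono ?_)
  rintro _ ⟨m, rfl⟩
  simpa [expPoly, hμ, zpow_ne_zero] using congrFun h m

theorem eq_zero_of_sum_expPoly_eq_zero [CharZero K] {ι : Type*} (s : Finset ι) {μ : ι → K}
    (hμ : Set.InjOn μ s) (hμ0 : ∀ i ∈ s, μ i ≠ 0) {P : ι → K[X]}
    (h : ∑ i ∈ s, expPoly (μ i) (P i) = 0) : ∀ i ∈ s, P i = 0 := by
  classical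
  induction s using Finset.induction_on generalizing μ P with
  | empty => simp
  | insert i₀ s hi₀ ih =>
    have hμi₀ : μ i₀ ≠ 0 := hμ0 i₀ (Finset.mem_insert_self i₀ s)
    set ν : ι → K := fun i => μ i / μ i₀
    set n := (P i₀).natDegree + 1
    have hν : ∑ i ∈ insert i₀ s, expPoly (ν i) (P i) = 0 := by
      ext m
      simp only [ν, Finset.sum_apply, expPoly_div, ← Finset.mul_sum]
      rw [← Finset.sum_apply, h, Pi.zero_apply, mul_zero]
    have hνs : ∑ i ∈ s, expPoly (ν i) ((twistedFwdDiff (ν i))^[n] (P i)) = 0 := by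
      have hνi₀ : ν i₀ = 1 := div_self hμi₀
      have hfix : (fwdDiff 1)^[n] (0 : ℤ → K) = 0 :=
        Function.iterate_fixed (fwdDiff_const 1 0) n
      have := congrArg (fwdDiff 1)^[n] hν
      rw [fwdDiff_iter_finsetSum, Finset.sum_insert hi₀, hνi₀,
        fwdDiff_iter_expPoly one_ne_zero, twistedFwdDiff_one_iter_eq_zero (Nat.lt_succ_self _),
        expPoly_zero, zero_add, hfix] at this
      rwa [Finset.sum_congr rfl fun i hi => fwdDiff_iter_expPoly ?_ _ _] at this
      exact div_ne_zero (hμ0 i (Finset.mem_insert_of_mem hi)) hμi₀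
    have hs : ∀ i ∈ s, P i = 0 := by
      intro i hi
      have hνi : ν i ≠ 1 := fun h1 => hi₀ <|
        hμ (Finset.mem_insert_of_mem hi) (Finset.mem_insert_self i₀ s)
          ((div_eq_one_iff_eq hμi₀).mp h1) ▸ hi
      refine (twistedFwdDiff_injective hνi).iterate n ?_
      rw [Function.iterate_fixed (map_zero _)]
      refine ih ?_ ?_ hνs i hi
      · exact fun a ha b hb hab => hμ (Finset.mem_insert_of_mem ha) (Finset.mem_insert_of_mem hb)
          ((div_left_inj' hμi₀).mp hab)
      · exact fun a ha => div_ne_zero (hμ0 a (Finset.mem_insert_of_mem ha)) hμi₀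
    have hP₀ : P i₀ = 0 := by
      rw [Finset.sum_insert hi₀, Finset.sum_eq_zero fun i hi => by rw [hs i hi, expPoly_zero],
        add_zero] at h
      exact eq_zero_of_expPoly_eq_zero hμi₀ h
    intro i hi
    rcases Finset.mem_insert.mp hi with rfl | hi
    exacts [hP₀, hs i hi]

theorem linearIndependent_of_degree_eq_val {R : Type*} [CommRing R] [IsDomain R] {k : ℕ}
    (f : Fin k → R[X]) (hf : ∀ j, (f j).degree = (j : ℕ)) : LinearIndependent R f := by
  let S : Sequence R :=
    { elems' := fun n => if h : n < k then f ⟨n, h⟩ else X ^ n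
      degree_eq' := fun n => by
        split_ifs with h
        · exact hf ⟨n, h⟩
        · exact degree_X_pow n }
  have hS : f = S ∘ Fin.val := _root_.funext fun j => (dif_pos j.isLt : S j = f j).symm
  exact hS ▸ S.linearIndependent.comp Fin.val Fin.val_injective

end Polynomial

open Polynomial

theorem stmt0_general {V : Type*} [AddCommGroup V] [Module ℂ V] (V₁ : Submodule ℂ V)
    (s : ℕ) (k : ℕ)
    (μ : Fin s → ℂ) (hμ0 : ∀ i, μ i ≠ 0) (hμ : Function.Injective μ)
    (f : Fin s → Fin (k + 1) → Polynomial ℂ)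
    (hf : ∀ i j, (f i j).degree = ((j : ℕ) : WithBot ℕ))
    (v : Fin s → Fin (k + 1) → V)
    (h : ∀ m : ℤ, (∑ i : Fin s, ∑ j : Fin (k + 1),
        ((μ i ^ m) * (f i j).eval (m : ℂ)) • v i j) ∈ V₁) :
    ∀ i j, v i j ∈ V₁ := by
  intro i j
  rw [← Submodule.Quotient.mk_eq_zero, ← Module.forall_dual_apply_eq_zero_iff ℂ]
  intro φ
  set a : Fin s → Fin (k + 1) → ℂ := fun p q => φ (Submodule.Quotient.mk (v p q))
  have hsum : ∑ i, expPoly (μ i) (∑ j, a i j • f i j) = 0 := by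
    ext m
    have hm : φ (V₁.mkQ (∑ i, ∑ j, (μ i ^ m * (f i j).eval (m : ℂ)) • v i j)) = 0 := by
      rw [V₁.mkQ_apply, (Submodule.Quotient.mk_eq_zero V₁).mpr (h m), map_zero]
    simp only [map_sum, map_smul, smul_eq_mul, Submodule.mkQ_apply] at hm
    simp only [expPoly, a, Finset.sum_apply, eval_finsetSum, eval_smul, smul_eq_mul,
      Finset.mul_sum, Pi.zero_apply]
    rw [← hm]
    exact Finset.sum_congr rfl fun _ _ => Finset.sum_congr rfl fun _ _ => by ring
  have hP := eq_zero_of_sum_expPoly_eq_zero Finset.univ hμ.injOn (fun i _ => hμ0 i) hsum i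
    (Finset.mem_univ i)
  exact Fintype.linearIndependent_iff.mp (linearIndependent_of_degree_eq_val (f i) (hf i)) _ hP j

theorem stmt0 {V : Type*} [AddCommGroup V] [Module ℂ V] (V₁ : Submodule ℂ V)
    (s : ℕ) (hs : 1 ≤ s) (k : ℕ)
    (μ : Fin s → ℂ) (hμ0 : ∀ i, μ i ≠ 0) (hμ : Function.Injective μ)
    (f : Fin s → Fin (k + 1) → Polynomial ℂ)
    (hf : ∀ i j, (f i j).degree = ((j : ℕ) : WithBot ℕ))
    (v : Fin s → Fin (k + 1) → V)
    (h : ∀ m : ℤ, (∑ i : Fin s, ∑ j : Fin (k + 1),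
        ((μ i ^ m) * (f i j).eval (m : ℂ)) • v i j) ∈ V₁) :
    ∀ i j, v i j ∈ V₁ :=
  stmt0_general V₁ s k μ hμ0 hμ f hf v h
end

section
/- For every b ∈ ℂ and all m, n ∈ ℤ the following identities of ℂ-linear operators on W hold: L_m∘L_n − L_n∘L_m = (n−m)·L_{m+n}; H_m∘H_n − H_n∘H_m = 0; L_m∘H_n − H_n∘L_m = n·H_{m+n}; L_m∘G_n⁺ − G_n⁺∘L_m = (n − m/2)·G_{m+n}⁺; L_m∘G_n⁻ − G_n⁻∘L_m = (n − m/2)·G_{m+n}⁻; H_m∘G_n⁺ − G_n⁺∘H_m = G_{m+n}⁺; H_m∘G_n⁻ − G_n⁻∘H_m = −G_{m+n}⁻; G_m⁺∘G_n⁻ + G_n⁻∘G_m⁺ = −2·L_{m+n} + (m−n)·H_{m+n}; G_m⁺∘G_n⁺ + G_n⁺∘G_m⁺ = 0; G_m⁻∘G_n⁻ + G_n⁻∘G_m⁻ = 0. (Thus these operators define a representation of the N=2 Ramond algebra on W with the central element acting as 0.) -/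
/-! The only property of `D` that matters is the twisted Leibniz rule `D (tᵐ f) = tᵐ (D + m) f`,
which holds because `D` multiplies each monomial by its degree. Using it to move every `D`
to the right of all the monomials, both sides of each relation become, componentwise,
`tᵐ⁺ⁿ (α D f + β f)` for scalars `α, β` polynomial in `m, n, b`, and the relation reduces to
identities between these scalars. -/

open LaurentPolynomial

noncomputable section

abbrev Lp := LaurentPolynomial ℂ

/-- `L_m(f,g) = (t^m(D+mb)f, t^m(D+m(b+1/2))g)` -/
def Lop (D : Lp →ₗ[ℂ] Lp) (b : ℂ) (m : ℤ) : Lp × Lp → Lp × Lp :=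
  fun w => (T m * (D w.1 + ((m : ℂ) * b) • w.1),
            T m * (D w.2 + ((m : ℂ) * (b + 1 / 2)) • w.2))

/-- `H_m(f,g) = (−2b·t^m f, (1−2b)·t^m g)` -/
def Hop (b : ℂ) (m : ℤ) : Lp × Lp → Lp × Lp :=
  fun w => ((-2 * b) • (T m * w.1), (1 - 2 * b) • (T m * w.2))

/-- `G_m⁺(f,g) = (0, −2t^m(D+2mb)f)` -/
def Gp (D : Lp →ₗ[ℂ] Lp) (b : ℂ) (m : ℤ) : Lp × Lp → Lp × Lp :=
  fun w => (0, (-2 : ℂ) • (T m * (D w.1 + (2 * (m : ℂ) * b) • w.1)))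

/-- `G_m⁻(f,g) = (t^m g, 0)` -/
def Gm (m : ℤ) : Lp × Lp → Lp × Lp :=
  fun w => (T m * w.2, 0)

theorem LaurentPolynomial.map_T_mul_of_map_T {R : Type*} [CommRing R]
    (D : R[T;T⁻¹] →ₗ[R] R[T;T⁻¹]) (hD : ∀ n : ℤ, D (T n) = (n : R) • T n)
    (m : ℤ) (f : R[T;T⁻¹]) :
    D (T m * f) = T m * (D f + (m : R) • f) := by
  induction f using LaurentPolynomial.induction_on' with
  | add p q hp hq => simp only [mul_add, map_add, hp, hq, smul_add]; abel
  | C_mul_T n a =>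
    simp only [← smul_eq_C_mul, mul_smul_comm, map_smul, ← T_add, hD, smul_smul,
      ← add_smul, Int.cast_add]
    ring_nf

theorem stmt1 (D : Lp →ₗ[ℂ] Lp)
    (hD : ∀ n : ℤ, D (T n) = (n : ℂ) • T n) (b : ℂ) (m n : ℤ) :
    (∀ w, Lop D b m (Lop D b n w) - Lop D b n (Lop D b m w)
        = ((n : ℂ) - (m : ℂ)) • Lop D b (m + n) w) ∧
    (∀ w, Hop b m (Hop b n w) - Hop b n (Hop b m w) = 0) ∧
    (∀ w, Lop D b m (Hop b n w) - Hop b n (Lop D b m w) = (n : ℂ) • Hop b (m + n) w) ∧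
    (∀ w, Lop D b m (Gp D b n w) - Gp D b n (Lop D b m w)
        = ((n : ℂ) - (m : ℂ) / 2) • Gp D b (m + n) w) ∧
    (∀ w, Lop D b m (Gm n w) - Gm n (Lop D b m w)
        = ((n : ℂ) - (m : ℂ) / 2) • Gm (m + n) w) ∧
    (∀ w, Hop b m (Gp D b n w) - Gp D b n (Hop b m w) = Gp D b (m + n) w) ∧
    (∀ w, Hop b m (Gm n w) - Gm n (Hop b m w) = -Gm (m + n) w) ∧
    (∀ w, Gp D b m (Gm n w) + Gm n (Gp D b m w)
        = (-2 : ℂ) • Lop D b (m + n) w + ((m : ℂ) - (n : ℂ)) • Hop b (m + n) w) ∧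
    (∀ w, Gp D b m (Gp D b n w) + Gp D b n (Gp D b m w) = 0) ∧
    (∀ w, Gm m (Gm n w) + Gm n (Gm m w) = 0) := by
  have hT : (T (n + m) : Lp) = T (m + n) := by rw [add_comm]
  refine ⟨?_, ?_, ?_, ?_, ?_, ?_, ?_, ?_, ?_, ?_⟩ <;> intro w <;> refine Prod.ext ?_ ?_ <;>
  · simp only [Lop, Hop, Gp, Gm, Prod.fst_sub, Prod.snd_sub, Prod.fst_add, Prod.snd_add,
      Prod.smul_fst, Prod.smul_snd, Prod.fst_neg, Prod.snd_neg, Prod.fst_zero, Prod.snd_zero,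
      map_T_mul_of_map_T D hD, map_add, map_smul, map_zero, smul_zero, mul_zero,
      mul_add, smul_add, mul_smul_comm, ← mul_assoc, ← T_add, hT]
    match_scalars <;> ring

end
end

section
/- For every b ∈ ℂ and all m, n ∈ ℤ the following identities of ℂ-linear operators on W hold: L_m∘L_n − L_n∘L_m = (n−m)·L_{m+n}; L_m∘G_n − G_n∘L_m = (n − m/2)·G_{m+n}; G_m∘G_n + G_n∘G_m = −2·L_{m+n}. (Thus these operators define a representation of the N=1 Ramond algebra on W with the central element acting as 0.) -/
/- STATEMENT 2: the twisted operators L_m, G_m on W = ℂ[t,t⁻¹] ⊕ ξℂ[t,t⁻¹] satisfy the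
defining relations of the N=1 Ramond algebra with the central element acting as 0. -/

open LaurentPolynomial

noncomputable section

/-- `G_m(f,g) = (−t^m g, t^m(D+2mb)f)` -/
def Gop (D : Lp →ₗ[ℂ] Lp) (b : ℂ) (m : ℤ) : Lp × Lp → Lp × Lp :=
  fun w => (-(T m * w.2), T m * (D w.1 + (2 * (m : ℂ) * b) • w.1))

/-! The only property of `D` that matters is the commutation rule `D ∘ t^m = t^m ∘ (D + m)`
of the Euler operator `t d/dt` with multiplication by `t^m`. Moving every `D` to the right
with it turns each of the three relations into an identity between expressions
`t^k (α D² + β D + γ) f` in which `t^k` is the same on both sides, so it reduces to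
comparing polynomials in `b`, `m`, `n`. -/

section

variable {D : Lp →ₗ[ℂ] Lp} (hD : ∀ n : ℤ, D (T n) = (n : ℂ) • T n)
include hD

theorem map_T_mul_of_map_T (m : ℤ) (f : Lp) :
    D (T m * f) = (m : ℂ) • (T m * f) + T m * D f := by
  induction f using LaurentPolynomial.induction_on' with
  | add p q hp hq =>
    rw [mul_add, map_add, hp, hq, map_add, mul_add, smul_add]
    abel
  | C_mul_T n a =>
    simp only [← smul_eq_C_mul, mul_smul_comm, ← T_add, map_smul, hD, Int.cast_add]
    module

theorem Lop_commutator (b : ℂ) (m n : ℤ) (w : Lp × Lp) :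
    Lop D b m (Lop D b n w) - Lop D b n (Lop D b m w)
      = ((n : ℂ) - (m : ℂ)) • Lop D b (m + n) w := by
  refine Prod.ext ?_ ?_ <;> simp only [Lop, Prod.fst_sub, Prod.snd_sub, Prod.smul_fst,
    Prod.smul_snd, map_add, map_smul, map_T_mul_of_map_T hD, mul_add, mul_smul_comm,
    ← mul_assoc, ← T_add, add_comm n m] <;>
    push_cast <;> module

theorem Lop_Gop_commutator (b : ℂ) (m n : ℤ) (w : Lp × Lp) :
    Lop D b m (Gop D b n w) - Gop D b n (Lop D b m w)
      = ((n : ℂ) - (m : ℂ) / 2) • Gop D b (m + n) w := by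
  refine Prod.ext ?_ ?_ <;> simp only [Lop, Gop, Prod.fst_sub, Prod.snd_sub, Prod.smul_fst,
    Prod.smul_snd, map_add, map_neg, map_smul, map_T_mul_of_map_T hD, mul_add, mul_neg,
    mul_smul_comm, ← mul_assoc, ← T_add, add_comm n m] <;>
    push_cast <;> module

theorem Gop_anticommutator (b : ℂ) (m n : ℤ) (w : Lp × Lp) :
    Gop D b m (Gop D b n w) + Gop D b n (Gop D b m w) = (-2 : ℂ) • Lop D b (m + n) w := by
  refine Prod.ext ?_ ?_ <;> simp only [Lop, Gop, Prod.fst_add, Prod.snd_add, Prod.smul_fst,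
    Prod.smul_snd, map_neg, map_T_mul_of_map_T hD, mul_add, mul_neg,
    mul_smul_comm, ← mul_assoc, ← T_add, add_comm n m] <;>
    push_cast <;> module

end

theorem stmt2 (D : Lp →ₗ[ℂ] Lp)
    (hD : ∀ n : ℤ, D (T n) = (n : ℂ) • T n) (b : ℂ) (m n : ℤ) :
    (∀ w, Lop D b m (Lop D b n w) - Lop D b n (Lop D b m w)
        = ((n : ℂ) - (m : ℂ)) • Lop D b (m + n) w) ∧
    (∀ w, Lop D b m (Gop D b n w) - Gop D b n (Lop D b m w)
        = ((n : ℂ) - (m : ℂ) / 2) • Gop D b (m + n) w) ∧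
    (∀ w, Gop D b m (Gop D b n w) + Gop D b n (Gop D b m w)
        = (-2 : ℂ) • Lop D b (m + n) w) :=
  ⟨Lop_commutator hD b m n, Lop_Gop_commutator hD b m n, Gop_anticommutator hD b m n⟩

end
end

section
/- For every b ∈ ℂ and all k, m ∈ ℤ, the identity of ℂ-linear operators on W holds: L_k ∘ G_{m−k} = Θ_m + k·Ξ_m + k²·b(1−2b)·E_m, where Θ_m(f,g) = (−t^m(D+m)g, t^m(D² + (1+2b)m·D + 2bm²)f), Ξ_m(f,g) = ((1−b)·t^m g, t^m(−(1/2+b)·D + (2b²−3b)m)f), and E_m(f,g) = (0, t^m f). In particular, the coefficient of k² in L_k ∘ G_{m−k} is b(1−2b)·E_m. -/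
/-! Since `D` is the Euler operator, `D (t^a f) = a t^a f + t^a D f`. Moving `D` past the powers
of `t` puts both sides in the form `t^m · (polynomial in D with coefficients in ℤ[b, k, m])`, and the
identity becomes an equality of these coefficients. -/

open LaurentPolynomial

noncomputable section

/-- `Θ_m(f,g) = (−t^m(D+m)g, t^m(D² + (1+2b)m·D + 2bm²)f)` -/
def Theta (D : Lp →ₗ[ℂ] Lp) (b : ℂ) (m : ℤ) : Lp × Lp → Lp × Lp :=
  fun w => (-(T m * (D w.2 + (m : ℂ) • w.2)),
            T m * (D (D w.1) + ((1 + 2 * b) * (m : ℂ)) • D w.1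
              + (2 * b * (m : ℂ) ^ 2) • w.1))

/-- `Ξ_m(f,g) = ((1−b)·t^m g, t^m(−(1/2+b)·D + (2b²−3b)m)f)` -/
def Xi (D : Lp →ₗ[ℂ] Lp) (b : ℂ) (m : ℤ) : Lp × Lp → Lp × Lp :=
  fun w => ((1 - b) • (T m * w.2),
            T m * ((-(1 / 2 + b)) • D w.1 + ((2 * b ^ 2 - 3 * b) * (m : ℂ)) • w.1))

/-- `E_m(f,g) = (0, t^m f)` -/
def Em (m : ℤ) : Lp × Lp → Lp × Lp :=
  fun w => (0, T m * w.1)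

theorem LaurentPolynomial.map_T_mul_of_map_T_eq_smul {R : Type*} [CommRing R]
    (D : R[T;T⁻¹] →ₗ[R] R[T;T⁻¹]) (hD : ∀ n : ℤ, D (T n) = (n : R) • T n) (a : ℤ)
    (f : R[T;T⁻¹]) : D (T a * f) = (a : R) • (T a * f) + T a * D f := by
  induction f using LaurentPolynomial.induction_on' with
  | add p q hp hq => simp only [mul_add, map_add, hp, hq, smul_add]; abel
  | C_mul_T n c =>
    simp only [← smul_eq_C_mul, mul_smul_comm, map_smul, ← T_add, hD]
    push_cast
    module

theorem stmt3 (D : Lp →ₗ[ℂ] Lp)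
    (hD : ∀ n : ℤ, D (T n) = (n : ℂ) • T n) (b : ℂ) (k m : ℤ) :
    ∀ w : Lp × Lp,
      Lop D b k (Gop D b (m - k) w)
        = Theta D b m w + (k : ℂ) • Xi D b m w
          + ((k : ℂ) ^ 2 * (b * (1 - 2 * b))) • Em m w := by
  rintro ⟨f, g⟩
  have hT : T k * T (m - k) = (T m : Lp) := by rw [← T_add, add_sub_cancel]
  simp only [Lop, Gop, Theta, Xi, Em, Prod.mk_add_mk, Prod.smul_mk, Prod.mk.injEq,
    map_neg, map_add, map_smul, map_T_mul_of_map_T_eq_smul D hD,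
    mul_add, mul_neg, mul_smul_comm, ← mul_assoc, hT]
  push_cast
  constructor <;> module

end
end

section
/- The only ℂ-subspaces S of ℂ[x] such that x·S ⊆ S, {p(x−1) : p ∈ S} ⊆ S, and {p(x+1) : p ∈ S} ⊆ S are {0} and ℂ[x]. Consequently, for every λ ∈ ℂ∖{0}, the module Ω(λ) over the Weyl algebra 𝒟 (generated by t, t⁻¹ and D_t) — with underlying space ℂ[x] and actions t^m·p = λ^m·p(x−m) for m ∈ ℤ and D_t·p = x·p — is irreducible. -/
open Polynomial

private lemma periodic_eq_C (p : Polynomial ℂ) (h : p.comp (X + C 1) = p) :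
    p = C (p.eval 0) := by
  have hall : ∀ k : ℕ, p.eval (k : ℂ) = p.eval 0 := by
    intro k
    induction k with
    | zero => simp
    | succ k ih =>
      have h2 := congrArg (eval (k : ℂ)) h
      rw [eval_comp] at h2
      simp only [eval_add, eval_X, eval_C] at h2
      push_cast
      rw [h2, ih]
  have hz : (p - C (p.eval 0)) = 0 := by
    apply eq_zero_of_infinite_isRoot
    apply (Set.infinite_range_of_injective (Nat.cast_injective : Function.Injective
      ((↑) : ℕ → ℂ))).mono
    rintro x ⟨k, rfl⟩
    simp [IsRoot, hall k]
  linear_combination hz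

private lemma one_mem_aux (S : Submodule ℂ (Polynomial ℂ))
    (hplus : ∀ p ∈ S, p.comp (X + C (1 : ℂ)) ∈ S) :
    ∀ n : ℕ, ∀ p ∈ S, p ≠ 0 → p.natDegree ≤ n → (1 : Polynomial ℂ) ∈ S := by
  intro n
  induction n with
  | zero =>
    intro p hp hp0 hd
    obtain ⟨c, rfl⟩ := natDegree_eq_zero.mp (Nat.le_zero.mp hd)
    have hc : c ≠ 0 := by simpa using hp0
    have := S.smul_mem c⁻¹ hp
    rwa [smul_C, smul_eq_mul, inv_mul_cancel₀ hc, map_one] at this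
  | succ n ih =>
    intro p hp hp0 hd
    by_cases h0 : p.natDegree = 0
    · exact ih p hp hp0 (by omega)
    · set q := p.comp (X + C 1) - p with hqdef
      have hq : q ∈ S := S.sub_mem (hplus p hp) hp
      have hq0 : q ≠ 0 := by
        intro h
        rw [hqdef, sub_eq_zero] at h
        exact h0 (by rw [periodic_eq_C p h]; exact natDegree_C _)
      have hXC : (X + C (1:ℂ)).natDegree = 1 := by
        simpa using natDegree_X_add_C (1:ℂ)
      have hlc : (p.comp (X + C (1:ℂ))).leadingCoeff = p.leadingCoeff := by
        rw [leadingCoeff_comp (by rw [hXC]; exact one_ne_zero)]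
        rw [(monic_X_add_C (1:ℂ)).leadingCoeff, one_pow, mul_one]
      have hcomp0 : p.comp (X + C (1:ℂ)) ≠ 0 := by
        intro h
        apply hp0
        rwa [← leadingCoeff_eq_zero, ← hlc, leadingCoeff_eq_zero]
      have hdegc : (p.comp (X + C (1:ℂ))).degree = p.degree := by
        rw [degree_eq_natDegree hcomp0, degree_eq_natDegree hp0,
          natDegree_comp, hXC, mul_one]
      have hdlt : q.degree < p.degree := by
        have := degree_sub_lt hdegc hcomp0 hlc
        rwa [hdegc] at this
      have hnlt : q.natDegree < p.natDegree := natDegree_lt_natDegree hq0 hdlt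
      exact ih q hq hq0 (by omega)

private lemma main1 (S : Submodule ℂ (Polynomial ℂ))
    (hX : ∀ p ∈ S, X * p ∈ S)
    (hplus : ∀ p ∈ S, p.comp (X + C (1 : ℂ)) ∈ S) :
    S = ⊥ ∨ S = ⊤ := by
  by_cases hbot : S = ⊥
  · exact Or.inl hbot
  right
  obtain ⟨p, hp, hp0⟩ := Submodule.exists_mem_ne_zero_of_ne_bot hbot
  have h1 : (1 : Polynomial ℂ) ∈ S := one_mem_aux S hplus p.natDegree p hp hp0 le_rfl
  have hall : ∀ r : Polynomial ℂ, r ∈ S := by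
    intro r
    induction r using Polynomial.induction_on with
    | C a => simpa [smul_eq_C_mul] using S.smul_mem a h1
    | add p q hp hq => exact S.add_mem hp hq
    | monomial n a hmem =>
      have := hX _ hmem
      have heq : C a * X ^ (n + 1) = X * (C a * X ^ n) := by ring
      rwa [heq]
  rw [eq_top_iff]
  exact fun r _ => hall r

theorem stmt17 :
    (∀ S : Submodule ℂ (Polynomial ℂ),
        (∀ p ∈ S, X * p ∈ S) →
        (∀ p ∈ S, p.comp (X - C (1 : ℂ)) ∈ S) →
        (∀ p ∈ S, p.comp (X + C (1 : ℂ)) ∈ S) →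
        S = ⊥ ∨ S = ⊤) ∧
    (∀ lam : ℂ, lam ≠ 0 →
      ∀ S : Submodule ℂ (Polynomial ℂ),
        (∀ m : ℤ, ∀ p ∈ S, lam ^ m • p.comp (X - C (m : ℂ)) ∈ S) →
        (∀ p ∈ S, X * p ∈ S) →
        S = ⊥ ∨ S = ⊤) := by
  constructor
  · intro S hX _ hplus
    exact main1 S hX hplus
  · intro lam hlam S hshift hX
    apply main1 S hX
    intro p hp
    have h := hshift (-1) p hp
    have hne : lam ^ (-1 : ℤ) ≠ 0 := zpow_ne_zero _ hlam
    have h2 := S.smul_mem (lam ^ (-1 : ℤ))⁻¹ h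
    rw [smul_smul, inv_mul_cancel₀ hne, one_smul] at h2
    simpa [sub_neg_eq_add] using h2
end
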